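/- arXiv:math/0606282 — 2 statements merged into one kernel-verified Lean document; each statement's English description precedes it below -/
import Mathlib

section
/- Let ℓ ≥ 3 be an integer, let e₁, …, e_{ℓ+1} be the standard orthonormal basis of ℝ^{ℓ+1}, and set u = e₁ − e₂ and v = e_ℓ − e_{ℓ+1}. Let Φ = {ε(e_i − e_j) : 1 ≤ i < j ≤ ℓ+1, ε ∈ {+1,−1}} be the root system of type A_ℓ. Then Σ_{α∈Φ} (⟨α,u⟩⁴ − 6⟨α,u⟩²⟨α,v⟩² + ⟨α,v⟩⁴) = 8ℓ + 8. -/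
/-!
The summand is `Re ((a + b i) ^ 4)` with `a = ⟨α, u⟩`, `b = ⟨α, v⟩`, and the signed roots are
exactly the `e_i - e_j` with `i ≠ j`. With `z_k = u_k + i v_k` the sum is therefore
`Re ∑_{i,j} (z_i - z_j) ^ 4 = Re (2n ∑ z⁴ - 8 ∑ z ∑ z³ + 6 (∑ z²)²)`, `n = ℓ + 1`.
Since `u` and `v` have disjoint supports, `z_k ^ m = u_k ^ m + i ^ m v_k ^ m`, whence
`∑ z = 0`, `∑ z² = 2 - 2 = 0` and `∑ z⁴ = 2 + 2`, and the sum is `8n`.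
-/

open Finset Complex

theorem Finset.sum_sum_sub_pow_four {R ι : Type*} [CommRing R] [Fintype ι] (z : ι → R) :
    ∑ i, ∑ j, (z i - z j) ^ 4 =
      2 * Fintype.card ι * ∑ i, z i ^ 4 - 8 * (∑ i, z i) * ∑ i, z i ^ 3
        + 6 * (∑ i, z i ^ 2) ^ 2 := by
  have expand : ∀ i j, (z i - z j) ^ 4 = z i ^ 4 + z j ^ 4 - 4 * (z i ^ 3 * z j)
      - 4 * (z i * z j ^ 3) + 6 * (z i ^ 2 * z j ^ 2) := fun i j => by ring
  simp only [expand, sum_add_distrib, sum_sub_distrib, ← mul_sum, ← sum_mul, sum_const,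
    card_univ, nsmul_eq_mul]
  ring

theorem Finset.sum_offDiag_eq_sum_sum {ι M : Type*} [Fintype ι] [DecidableEq ι]
    [AddCommMonoid M] (f : ι → ι → M) (hf : ∀ i, f i i = 0) :
    ∑ p ∈ (univ.offDiag : Finset (ι × ι)), f p.1 p.2 = ∑ i, ∑ j, f i j := by
  rw [← sum_product', univ_product_univ]
  refine sum_subset (subset_univ _) fun p _ hp => ?_
  simp only [mem_offDiag, mem_univ, true_and, not_not] at hp
  rw [hp, hf]

theorem add_pow_of_mul_eq_zero {R : Type*} [CommSemiring R] [NoZeroDivisors R] {a b : R}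
    (hab : a * b = 0) {m : ℕ} (hm : m ≠ 0) : (a + b) ^ m = a ^ m + b ^ m := by
  rcases mul_eq_zero.mp hab with rfl | rfl <;> simp [zero_pow hm]

theorem Complex.re_add_mul_I_pow_four (a b : ℝ) :
    (((a : ℂ) + b * I) ^ 4).re = a ^ 4 - 6 * a ^ 2 * b ^ 2 + b ^ 4 := by
  simp [pow_succ, mul_re, mul_im]
  ring

theorem Complex.sum_add_mul_I_pow_of_mul_eq_zero {ι : Type*} [Fintype ι] {x y : ι → ℝ}
    (hxy : ∀ k, x k * y k = 0) {m : ℕ} (hm : m ≠ 0) :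
    ∑ k, ((x k : ℂ) + y k * I) ^ m = (∑ k, x k ^ m : ℝ) + (∑ k, y k ^ m : ℝ) * I ^ m := by
  have pointwise : ∀ k,
      ((x k : ℂ) + y k * I) ^ m = ((x k ^ m : ℝ) : ℂ) + ((y k ^ m : ℝ) : ℂ) * I ^ m := fun k => by
    have hxyI : (x k : ℂ) * (y k * I) = 0 := by
      rw [← mul_assoc, ← ofReal_mul, hxy, ofReal_zero, zero_mul]
    rw [add_pow_of_mul_eq_zero hxyI hm]
    push_cast
    ring
  simp only [pointwise, sum_add_distrib, ← sum_mul, ofReal_sum]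

namespace EuclideanSpace

variable {ι : Type*} [DecidableEq ι]

theorem single_sub_single_apply (p q k : ι) :
    (single p (1 : ℝ) - single q 1 : EuclideanSpace ℝ ι) k =
      (if k = p then (1 : ℝ) else 0) - (if k = q then 1 else 0) := by
  simp [PiLp.single_apply]

theorem single_sub_single_mul_eq_zero {p q r s : ι} (hpr : p ≠ r) (hps : p ≠ s)
    (hqr : q ≠ r) (hqs : q ≠ s) (k : ι) :
    (single p (1 : ℝ) - single q 1 : EuclideanSpace ℝ ι) k *
      (single r (1 : ℝ) - single s 1 : EuclideanSpace ℝ ι) k = 0 := by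
  simp only [single_sub_single_apply]
  by_cases hkp : k = p <;> by_cases hkq : k = q <;> simp_all

variable [Fintype ι]

theorem inner_single_sub_single_left (i j : ι) (x : EuclideanSpace ℝ ι) :
    inner ℝ (single i (1 : ℝ) - single j 1) x = x i - x j := by
  simp [inner_sub_left, inner_single_left]

theorem sum_single_sub_single_pow {p q : ι} (hpq : p ≠ q) {m : ℕ} (hm : m ≠ 0) :
    ∑ k, (single p (1 : ℝ) - single q 1 : EuclideanSpace ℝ ι) k ^ m = 1 + (-1) ^ m := by
  have pointwise : ∀ k, (single p (1 : ℝ) - single q 1 : EuclideanSpace ℝ ι) k ^ m =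
      (if k = p then 1 else 0) + (if k = q then (-1) ^ m else 0) := fun k => by
    rw [single_sub_single_apply]
    by_cases hkp : k = p <;> by_cases hkq : k = q <;> simp_all [zero_pow hm]
  simp only [pointwise, sum_add_distrib, sum_ite_eq', mem_univ, if_true]

theorem injOn_single_sub_single :
    Set.InjOn (fun p : ι × ι => single p.1 (1 : ℝ) - single p.2 1)
      (univ.offDiag : Finset (ι × ι)) := by
  rintro ⟨i, j⟩ hij ⟨k, l⟩ hkl h
  simp only [coe_offDiag, Set.mem_offDiag, coe_univ, Set.mem_univ, true_and] at hij hkl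
  have at_i := congrArg (· i) h
  have at_j := congrArg (· j) h
  simp only [single_sub_single_apply] at at_i at_j
  simp only [Prod.mk.injEq]
  clear h
  split_ifs at at_i at_j <;> grind

theorem image_signs_smul_eq_image_offDiag [LinearOrder ι] :
    (({(1 : ℝ), -1} : Finset ℝ) ×ˢ (univ : Finset (ι × ι)).filter (fun p => p.1 < p.2)).image
        (fun p => p.1 • (single p.2.1 (1 : ℝ) - single p.2.2 1)) =
      (univ.offDiag : Finset (ι × ι)).image (fun p => single p.1 (1 : ℝ) - single p.2 1) := by
  ext α
  simp only [mem_image, mem_product, mem_filter, mem_insert, mem_singleton, mem_offDiag,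
    mem_univ, true_and, Prod.exists]
  constructor
  · rintro ⟨c, i, j, ⟨rfl | rfl, hij⟩, rfl⟩
    · exact ⟨i, j, hij.ne, (one_smul _ _).symm⟩
    · exact ⟨j, i, hij.ne', by rw [neg_one_smul, neg_sub]⟩
  · rintro ⟨i, j, hij, rfl⟩
    rcases hij.lt_or_gt with hij | hji
    · exact ⟨1, i, j, ⟨Or.inl rfl, hij⟩, one_smul _ _⟩
    · exact ⟨-1, j, i, ⟨Or.inr rfl, hji⟩, by rw [neg_one_smul, neg_sub]⟩

end EuclideanSpace

/-- For the root system of type `A_ℓ` (`ℓ ≥ 3`), realized in `ℝ^{ℓ+1}` as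
`Φ = {±(e_i − e_j) : i < j}`, with `u = e₁ − e₂` and `v = e_ℓ − e_{ℓ+1}`,
one has `Σ_{α∈Φ} (⟨α,u⟩⁴ − 6⟨α,u⟩²⟨α,v⟩² + ⟨α,v⟩⁴) = 8ℓ + 8`. -/
theorem rootSum_typeA (ℓ : ℕ) (hℓ : 3 ≤ ℓ) :
    let e : Fin (ℓ + 1) → EuclideanSpace ℝ (Fin (ℓ + 1)) :=
      fun i => EuclideanSpace.single i (1 : ℝ)
    let u : EuclideanSpace ℝ (Fin (ℓ + 1)) := e ⟨0, by omega⟩ - e ⟨1, by omega⟩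
    let v : EuclideanSpace ℝ (Fin (ℓ + 1)) := e ⟨ℓ - 1, by omega⟩ - e ⟨ℓ, by omega⟩
    let Φ : Finset (EuclideanSpace ℝ (Fin (ℓ + 1))) :=
      (({(1 : ℝ), -1} : Finset ℝ) ×ˢ
          ((Finset.univ : Finset (Fin (ℓ + 1) × Fin (ℓ + 1))).filter
            fun p => p.1 < p.2)).image
        fun p => p.1 • (e p.2.1 - e p.2.2)
    ∑ α ∈ Φ,
        ((inner ℝ α u : ℝ) ^ 4 - 6 * (inner ℝ α u : ℝ) ^ 2 * (inner ℝ α v : ℝ) ^ 2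
          + (inner ℝ α v : ℝ) ^ 4)
      = 8 * (ℓ : ℝ) + 8 := by
  intro e u v Φ
  have huv : ∀ k, u k * v k = 0 := EuclideanSpace.single_sub_single_mul_eq_zero
    (by simp [Fin.ext_iff]; omega) (by simp [Fin.ext_iff]; omega)
    (by simp [Fin.ext_iff]; omega) (by simp [Fin.ext_iff]; omega)
  let z : Fin (ℓ + 1) → ℂ := fun k => u k + v k * I
  have hz : ∀ m ≠ 0, ∑ k, z k ^ m = (1 + (-1) ^ m) * (1 + I ^ m) := fun m hm => by
    rw [sum_add_mul_I_pow_of_mul_eq_zero huv hm,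
      EuclideanSpace.sum_single_sub_single_pow (by simp [Fin.ext_iff]) hm,
      EuclideanSpace.sum_single_sub_single_pow (by simp [Fin.ext_iff]; omega) hm]
    push_cast
    ring
  let F : Fin (ℓ + 1) → Fin (ℓ + 1) → ℝ := fun i j =>
    (u i - u j) ^ 4 - 6 * (u i - u j) ^ 2 * (v i - v j) ^ 2 + (v i - v j) ^ 4
  have hF : ∀ i j, F i j = ((z i - z j) ^ 4).re := fun i j => by
    rw [show z i - z j = ((u i - u j : ℝ) : ℂ) + ((v i - v j : ℝ) : ℂ) * I by push_cast; ring,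
      re_add_mul_I_pow_four]
  calc _ = ∑ p ∈ (univ.offDiag : Finset (Fin (ℓ + 1) × Fin (ℓ + 1))), F p.1 p.2 := by
        rw [show Φ = _ from EuclideanSpace.image_signs_smul_eq_image_offDiag,
          sum_image EuclideanSpace.injOn_single_sub_single]
        simp only [EuclideanSpace.inner_single_sub_single_left, F]
    _ = ∑ i, ∑ j, F i j := sum_offDiag_eq_sum_sum F fun i => by simp [F]
    _ = (∑ i, ∑ j, (z i - z j) ^ 4).re := by simp only [hF, re_sum]
    _ = 8 * ℓ + 8 := by
        rw [sum_sum_sub_pow_four, hz 4 four_ne_zero, hz 2 two_ne_zero,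
          show ∑ k, z k = 0 by simpa using hz 1 one_ne_zero]
        norm_num
        ring
end

section
/- Let V be a finite-dimensional complex vector space with dim V ≤ 4, and let e, f, h be linear endomorphisms of V satisfying [h,e] = 2e, [h,f] = −2f, and [e,f] = h (commutators of endomorphisms), such that V has no proper nonzero subspace invariant under all of e, f and h (i.e. V is an irreducible sl₂(ℂ)-module). Then trace(2·e∘f∘e∘f + 4·e∘e∘f∘f) = trace(h⁴). -/
/-- For an irreducible representation of `sl₂(ℂ)` on a complex vector space `V`
of dimension at most 4, given by endomorphisms `e, f, h` with `[h,e] = 2e`,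
`[h,f] = −2f`, `[e,f] = h`, one has
`trace(2·e∘f∘e∘f + 4·e∘e∘f∘f) = trace(h⁴)`. -/
theorem sl2_trace_efef_eq_hhhh
    (V : Type*) [AddCommGroup V] [Module ℂ V] [FiniteDimensional ℂ V]
    (hdim : Module.finrank ℂ V ≤ 4)
    (e f h : Module.End ℂ V)
    (he : h * e - e * h = 2 • e)
    (hf : h * f - f * h = -(2 • f))
    (hef : e * f - f * e = h)
    (hirr : ∀ W : Submodule ℂ V,
      (∀ x ∈ W, e x ∈ W) → (∀ x ∈ W, f x ∈ W) → (∀ x ∈ W, h x ∈ W) →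
      W = ⊥ ∨ W = ⊤) :
    LinearMap.trace ℂ V (2 • (e * f * e * f) + 4 • (e * e * f * f))
      = LinearMap.trace ℂ V (h ^ 4) := by
  by_cases hnt : Nontrivial V
  case neg =>
    haveI : Subsingleton V := not_nontrivial_iff_subsingleton.mp hnt
    exact congrArg _ (Subsingleton.elim _ _)
  -- basic commutation relations with ℂ-scalars
  have h2e : (2:ℕ) • e = (2:ℂ) • e := by
    rw [← Nat.cast_smul_eq_nsmul ℂ 2 e]; norm_num
  have h2f : (2:ℕ) • f = (2:ℂ) • f := by
    rw [← Nat.cast_smul_eq_nsmul ℂ 2 f]; norm_num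
  have rhe : h * e = e * h + (2:ℂ) • e := by
    rw [← h2e, sub_eq_iff_eq_add.mp he]; abel
  have rhf : h * f = f * h - (2:ℂ) • f := by
    rw [← h2f, sub_eq_iff_eq_add.mp hf]; abel
  have rfe : f * e = e * f - h := by
    rw [← hef]; abel
  have Rhe : ∀ x : Module.End ℂ V, h*(e*x) = e*(h*x) + (2:ℂ)•(e*x) := fun x => by
    rw [← mul_assoc, rhe, add_mul, smul_mul_assoc, mul_assoc]
  have Rhf : ∀ x : Module.End ℂ V, h*(f*x) = f*(h*x) - (2:ℂ)•(f*x) := fun x => by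
    rw [← mul_assoc, rhf, sub_mul, smul_mul_assoc, mul_assoc]
  have Rfe : ∀ x : Module.End ℂ V, f*(e*x) = e*(f*x) - h*x := fun x => by
    rw [← mul_assoc, rfe, sub_mul, mul_assoc]
  -- the Casimir operator
  set C : Module.End ℂ V := (2:ℂ) • (e*f) + (2:ℂ) • (f*e) + h*h with hCdef
  have Ce : C * e = e * C := by
    rw [hCdef]
    simp only [mul_add, add_mul, mul_sub, sub_mul, smul_mul_assoc, mul_smul_comm, smul_add,
      smul_sub, smul_smul, mul_assoc, Rhe, Rhf, Rfe, rhe, rhf, rfe]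
    module
  have Cf : C * f = f * C := by
    rw [hCdef]
    simp only [mul_add, add_mul, mul_sub, sub_mul, smul_mul_assoc, mul_smul_comm, smul_add,
      smul_sub, smul_smul, mul_assoc, Rhe, Rhf, Rfe, rhe, rhf, rfe]
    module
  have Ch : C * h = h * C := by
    rw [hCdef]
    simp only [mul_add, add_mul, mul_sub, sub_mul, smul_mul_assoc, mul_smul_comm, smul_add,
      smul_sub, smul_smul, mul_assoc, Rhe, Rhf, Rfe, rhe, rhf, rfe]
    module
  -- Schur: C is a scalar
  obtain ⟨μ, hμ⟩ := Module.End.exists_eigenvalue C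
  have hW : Module.End.eigenspace C μ = ⊤ := by
    rcases hirr (Module.End.eigenspace C μ)
      (fun x hx => by
        rw [Module.End.mem_eigenspace_iff] at hx ⊢
        calc C (e x) = (C * e) x := rfl
          _ = (e * C) x := by rw [Ce]
          _ = e (C x) := rfl
          _ = μ • e x := by rw [hx, map_smul])
      (fun x hx => by
        rw [Module.End.mem_eigenspace_iff] at hx ⊢
        calc C (f x) = (C * f) x := rfl
          _ = (f * C) x := by rw [Cf]
          _ = f (C x) := rfl
          _ = μ • f x := by rw [hx, map_smul])
      (fun x hx => by
        rw [Module.End.mem_eigenspace_iff] at hx ⊢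
        calc C (h x) = (C * h) x := rfl
          _ = (h * C) x := by rw [Ch]
          _ = h (C x) := rfl
          _ = μ • h x := by rw [hx, map_smul]) with hbot | htop
    · exact absurd hbot (Module.End.hasEigenvalue_iff.mp hμ)
    · exact htop
  have hC : C = μ • (1 : Module.End ℂ V) := by
    ext x
    have hx : x ∈ Module.End.eigenspace C μ := hW ▸ Submodule.mem_top
    rw [Module.End.mem_eigenspace_iff] at hx
    simpa using hx
  -- polynomial expressions for e*f and f*e
  have hP : (4:ℂ) • (e*f) = μ • (1 : Module.End ℂ V) + (2:ℂ) • h - h*h := by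
    have : (4:ℂ) • (e*f)
        = ((2:ℂ) • (e*f) + (2:ℂ) • (f*e) + h*h) + (2:ℂ) • (e*f - f*e) - h*h := by
      module
    rw [this, hef, ← hCdef, hC]
  have hQ : (4:ℂ) • (f*e) = μ • (1 : Module.End ℂ V) - (2:ℂ) • h - h*h := by
    have : (4:ℂ) • (f*e) = (4:ℂ) • (e*f) - (4:ℂ) • (e*f - f*e) := by module
    rw [this, hef, hP]; module
  -- auxiliary commutation rule for f past h
  have rfh : f * h = h * f + (2:ℂ) • f := by rw [rhf]; abel
  have Ff : ∀ x : Module.End ℂ V, f*(h*x) = h*(f*x) + (2:ℂ)•(f*x) := fun x => by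
    rw [← mul_assoc, rfh, add_mul, smul_mul_assoc, mul_assoc]
  have G0 : (4:ℂ) * LinearMap.trace ℂ V (e*f) = μ * (Module.finrank ℂ V : ℂ) + 2 * LinearMap.trace ℂ V (h) - LinearMap.trace ℂ V (h*h) := by
    rw [← smul_eq_mul, ← map_smul]
    rw [hP]
    simp only [mul_add, add_mul, mul_sub, sub_mul, mul_smul_comm, smul_mul_assoc, mul_one, one_mul, smul_smul, smul_add, smul_sub, map_add, map_sub, map_smul, smul_eq_mul, mul_assoc, LinearMap.trace_one]
  have G1 : (4:ℂ) * LinearMap.trace ℂ V (h*(e*f)) = μ * LinearMap.trace ℂ V (h) + 2 * LinearMap.trace ℂ V (h*h) - LinearMap.trace ℂ V (h*(h*h)) := by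
    rw [← smul_eq_mul, ← map_smul]
    rw [show (4:ℂ)•(h*(e*f)) = h*((4:ℂ)•(e*f)) by rw [mul_smul_comm], hP]
    simp only [mul_add, add_mul, mul_sub, sub_mul, mul_smul_comm, smul_mul_assoc, mul_one, one_mul, smul_smul, smul_add, smul_sub, map_add, map_sub, map_smul, smul_eq_mul, mul_assoc, LinearMap.trace_one]
  have G2 : (4:ℂ) * LinearMap.trace ℂ V (h*(h*(e*f))) = μ * LinearMap.trace ℂ V (h*h) + 2 * LinearMap.trace ℂ V (h*(h*h)) - LinearMap.trace ℂ V (h*(h*(h*h))) := by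
    rw [← smul_eq_mul, ← map_smul]
    rw [show (4:ℂ)•(h*(h*(e*f))) = h*(h*((4:ℂ)•(e*f))) by rw [mul_smul_comm, mul_smul_comm], hP]
    simp only [mul_add, add_mul, mul_sub, sub_mul, mul_smul_comm, smul_mul_assoc, mul_one, one_mul, smul_smul, smul_add, smul_sub, map_add, map_sub, map_smul, smul_eq_mul, mul_assoc, LinearMap.trace_one]
  have G3 : (4:ℂ) * LinearMap.trace ℂ V (h*(h*(h*(e*f)))) = μ * LinearMap.trace ℂ V (h*(h*h)) + 2 * LinearMap.trace ℂ V (h*(h*(h*h))) - LinearMap.trace ℂ V (h*(h*(h*(h*h)))) := by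
    rw [← smul_eq_mul, ← map_smul]
    rw [show (4:ℂ)•(h*(h*(h*(e*f)))) = h*(h*(h*((4:ℂ)•(e*f)))) by rw [mul_smul_comm, mul_smul_comm, mul_smul_comm], hP]
    simp only [mul_add, add_mul, mul_sub, sub_mul, mul_smul_comm, smul_mul_assoc, mul_one, one_mul, smul_smul, smul_add, smul_sub, map_add, map_sub, map_smul, smul_eq_mul, mul_assoc, LinearMap.trace_one]
  have H0 : (4:ℂ) * LinearMap.trace ℂ V (f*e) = μ * (Module.finrank ℂ V : ℂ) - 2 * LinearMap.trace ℂ V (h) - LinearMap.trace ℂ V (h*h) := by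
    rw [← smul_eq_mul, ← map_smul]
    rw [hQ]
    simp only [mul_add, add_mul, mul_sub, sub_mul, mul_smul_comm, smul_mul_assoc, mul_one, one_mul, smul_smul, smul_add, smul_sub, map_add, map_sub, map_smul, smul_eq_mul, mul_assoc, LinearMap.trace_one]
  have H1 : (4:ℂ) * LinearMap.trace ℂ V (h*(f*e)) = μ * LinearMap.trace ℂ V (h) - 2 * LinearMap.trace ℂ V (h*h) - LinearMap.trace ℂ V (h*(h*h)) := by
    rw [← smul_eq_mul, ← map_smul]
    rw [show (4:ℂ)•(h*(f*e)) = h*((4:ℂ)•(f*e)) by rw [mul_smul_comm], hQ]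
    simp only [mul_add, add_mul, mul_sub, sub_mul, mul_smul_comm, smul_mul_assoc, mul_one, one_mul, smul_smul, smul_add, smul_sub, map_add, map_sub, map_smul, smul_eq_mul, mul_assoc, LinearMap.trace_one]
  have H2 : (4:ℂ) * LinearMap.trace ℂ V (h*(h*(f*e))) = μ * LinearMap.trace ℂ V (h*h) - 2 * LinearMap.trace ℂ V (h*(h*h)) - LinearMap.trace ℂ V (h*(h*(h*h))) := by
    rw [← smul_eq_mul, ← map_smul]
    rw [show (4:ℂ)•(h*(h*(f*e))) = h*(h*((4:ℂ)•(f*e))) by rw [mul_smul_comm, mul_smul_comm], hQ]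
    simp only [mul_add, add_mul, mul_sub, sub_mul, mul_smul_comm, smul_mul_assoc, mul_one, one_mul, smul_smul, smul_add, smul_sub, map_add, map_sub, map_smul, smul_eq_mul, mul_assoc, LinearMap.trace_one]
  have H3 : (4:ℂ) * LinearMap.trace ℂ V (h*(h*(h*(f*e)))) = μ * LinearMap.trace ℂ V (h*(h*h)) - 2 * LinearMap.trace ℂ V (h*(h*(h*h))) - LinearMap.trace ℂ V (h*(h*(h*(h*h)))) := by
    rw [← smul_eq_mul, ← map_smul]
    rw [show (4:ℂ)•(h*(h*(h*(f*e)))) = h*(h*(h*((4:ℂ)•(f*e)))) by rw [mul_smul_comm, mul_smul_comm, mul_smul_comm], hQ]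
    simp only [mul_add, add_mul, mul_sub, sub_mul, mul_smul_comm, smul_mul_assoc, mul_one, one_mul, smul_smul, smul_add, smul_sub, map_add, map_sub, map_smul, smul_eq_mul, mul_assoc, LinearMap.trace_one]
  have F0 : LinearMap.trace ℂ V (e*f) = LinearMap.trace ℂ V (f*e) := LinearMap.trace_mul_comm ℂ e f
  have F1 : LinearMap.trace ℂ V (h*(e*f)) = LinearMap.trace ℂ V (h*(f*e)) + 2 * LinearMap.trace ℂ V (f*e) := by
    have t := LinearMap.trace_mul_comm ℂ (h*e) f
    simp only [mul_assoc] at t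
    rw [Ff] at t
    simp only [map_add, map_smul, smul_eq_mul] at t
    linear_combination t
  have F2 : LinearMap.trace ℂ V (h*(h*(e*f))) = LinearMap.trace ℂ V (h*(h*(f*e))) + 4 * LinearMap.trace ℂ V (h*(f*e)) + 4 * LinearMap.trace ℂ V (f*e) := by
    have t := LinearMap.trace_mul_comm ℂ (h*(h*e)) f
    simp only [mul_assoc] at t
    simp only [Ff, mul_add, mul_smul_comm, smul_add, smul_smul] at t
    simp only [map_add, map_smul, smul_eq_mul] at t
    linear_combination t
  have F3 : LinearMap.trace ℂ V (h*(h*(h*(e*f)))) = LinearMap.trace ℂ V (h*(h*(h*(f*e)))) + 6 * LinearMap.trace ℂ V (h*(h*(f*e))) + 12 * LinearMap.trace ℂ V (h*(f*e)) + 8 * LinearMap.trace ℂ V (f*e) := by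
    have t := LinearMap.trace_mul_comm ℂ (h*(h*(h*e))) f
    simp only [mul_assoc] at t
    simp only [Ff, mul_add, mul_smul_comm, smul_add, smul_smul] at t
    simp only [map_add, map_smul, smul_eq_mul] at t
    linear_combination t
  have ht1 : LinearMap.trace ℂ V (h) = 0 := by linear_combination F0 - (1/4)*G0 + (1/4)*H0
  have ht2 : 3 * LinearMap.trace ℂ V (h*h) = μ * (Module.finrank ℂ V : ℂ) := by
    linear_combination 2*F1 - (1/2)*G1 + (1/2)*H1 + H0 - 2*ht1
  have ht3 : LinearMap.trace ℂ V (h*(h*h)) = 0 := by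
    linear_combination (1/2)*F2 - (1/8)*G2 + (1/8)*H2 + (1/2)*H1 + (1/2)*H0 + (μ/2 - 1)*ht1 - (1/2)*ht2
  have ht4 : 15 * LinearMap.trace ℂ V (h*(h*(h*h))) = 3*μ^2*(Module.finrank ℂ V : ℂ) - 4*μ*(Module.finrank ℂ V : ℂ) := by
    linear_combination 6*F3 - (3/2)*G3 + (3/2)*H3 + 9*H2 + 18*H1 + 12*H0 + (18*μ-24)*ht1 + (3*μ-16)*ht2 - 36*ht3
  have K1 : (16:ℂ) * LinearMap.trace ℂ V (e*f*e*f) = μ*μ*(Module.finrank ℂ V : ℂ) + 4*μ*LinearMap.trace ℂ V (h) + (4-2*μ)*LinearMap.trace ℂ V (h*h) - 4*LinearMap.trace ℂ V (h*(h*h)) + LinearMap.trace ℂ V (h*(h*(h*h))) := by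
    rw [mul_assoc (e*f) e f, ← smul_eq_mul, ← map_smul]
    rw [show (16:ℂ)•((e*f)*(e*f)) = ((4:ℂ)•(e*f))*((4:ℂ)•(e*f)) by
      rw [smul_mul_assoc, mul_smul_comm, smul_smul]; norm_num]
    rw [hP]
    simp only [mul_add, add_mul, mul_sub, sub_mul, mul_smul_comm, smul_mul_assoc, mul_one, one_mul, smul_smul, smul_add, smul_sub, map_add, map_sub, map_smul, smul_eq_mul, mul_assoc, LinearMap.trace_one]
    ring
  have K2 : (16:ℂ) * LinearMap.trace ℂ V (e*e*f*f) = μ*μ*(Module.finrank ℂ V : ℂ) - (2*μ+4)*LinearMap.trace ℂ V (h*h) + LinearMap.trace ℂ V (h*(h*(h*h))) := by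
    have t := LinearMap.trace_mul_comm ℂ (e*e*f) f
    rw [t, ← smul_eq_mul, ← map_smul]
    rw [show (16:ℂ)•(f*(e*e*f)) = ((4:ℂ)•(f*e))*((4:ℂ)•(e*f)) by
      simp only [smul_mul_assoc, mul_smul_comm, smul_smul, mul_assoc]; norm_num]
    rw [hP, hQ]
    simp only [mul_add, add_mul, mul_sub, sub_mul, mul_smul_comm, smul_mul_assoc, mul_one, one_mul, smul_smul, smul_add, smul_sub, map_add, map_sub, map_smul, smul_eq_mul, mul_assoc, LinearMap.trace_one]
    ring
  have hp4 : h^4 = h*(h*(h*h)) := by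
    rw [pow_succ, pow_succ, pow_two, mul_assoc, mul_assoc]
  rw [hp4]
  have expand : LinearMap.trace ℂ V (2 • (e * f * e * f) + 4 • (e * e * f * f))
      = 2 * LinearMap.trace ℂ V (e*f*e*f) + 4 * LinearMap.trace ℂ V (e*e*f*f) := by
    rw [map_add, ← Nat.cast_smul_eq_nsmul ℂ 2 (e*f*e*f), ← Nat.cast_smul_eq_nsmul ℂ 4 (e*e*f*f),
      map_smul, map_smul]
    norm_num [smul_eq_mul]
  rw [expand]
  linear_combination (1/8)*K1 + (1/4)*K2 + (μ/2)*ht1 - (1/2)*ht3 - (1/24)*ht4 - (μ/4 + 1/6)*ht2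
end
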